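/- If b_k = 0 for all k ≥ n, then for every state i with 0 ≤ i < n the conditional mean of the next state satisfies h_i = E[min(i+τ, n)] − (1−p)·E[(i+τ)·b_{i+τ}]. -/
import Mathlib


open scoped BigOperators

/-- Binomial probability `g_{kj}(p) = C(k,j) p^j (1-p)^{k-j}` for `j ≤ k`, else `0`. -/
noncomputable def g (k j : ℕ) (p : ℝ) : ℝ :=
  if j ≤ k then (k.choose j : ℝ) * p ^ j * (1 - p) ^ (k - j) else 0

/-- `Q_{ij}`: no-division part of the transition probability. -/
noncomputable def Qmat (n : ℕ) (q b : ℕ → ℝ) (i j : ℕ) : ℝ :=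
  if j < n then (if i ≤ j then q (j - i) * (1 - b j) else 0)
  else ∑' t : ℕ, if n ≤ i + t then q t * (1 - b (i + t)) else 0

/-- `R_{ij}(p)`: division part of the transition probability. -/
noncomputable def Rmat (n : ℕ) (q b : ℕ → ℝ) (p : ℝ) (i j : ℕ) : ℝ :=
  if j < n then ∑' t : ℕ, q t * b (i + t) * g (i + t) j p
  else ∑' t : ℕ, if n ≤ i + t then
      q t * b (i + t) * ∑ j' ∈ Finset.Icc n (i + t), g (i + t) j' p
    else 0

/-- Transition probabilities `p_{ij} = Q_{ij} + R_{ij}(p)` for `i < n`, and `p_{nn} = 1`. -/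
noncomputable def pmat (n : ℕ) (q b : ℕ → ℝ) (p : ℝ) (i j : ℕ) : ℝ :=
  if i < n then Qmat n q b i j + Rmat n q b p i j
  else if j = n then 1 else 0

/-- The conditional mean of the next state, `h_i = ∑_{j=1}^n j p_{ij}`. -/
noncomputable def hmean (n : ℕ) (q b : ℕ → ℝ) (p : ℝ) (i : ℕ) : ℝ :=
  ∑ j ∈ Finset.Icc 1 n, (j : ℝ) * pmat n q b p i j

lemma binom_mean (k : ℕ) (p : ℝ) :
    ∑ j ∈ Finset.range (k+1), (j:ℝ) * ((k.choose j : ℝ) * p ^ j * (1-p) ^ (k-j)) = k * p := by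
  have h := congrArg (Polynomial.eval p) (bernsteinPolynomial.sum_smul ℝ k)
  simp only [Polynomial.eval_finset_sum, Polynomial.eval_smul, bernsteinPolynomial,
    Polynomial.eval_mul, Polynomial.eval_pow, Polynomial.eval_natCast, Polynomial.eval_sub,
    Polynomial.eval_one, Polynomial.eval_X, nsmul_eq_mul] at h
  convert h using 2

lemma g_mean (k N : ℕ) (hk : k ≤ N) (p : ℝ) :
    ∑ j ∈ Finset.Icc 1 N, (j:ℝ) * g k j p = k * p := by
  have h1 : Finset.range (N+1) = insert 0 (Finset.Icc 1 N) := by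
    ext x; simp [Finset.mem_range, Finset.mem_Icc]; omega
  have h2 : ∑ j ∈ Finset.Icc 1 N, (j:ℝ) * g k j p
      = ∑ j ∈ Finset.range (N+1), (j:ℝ) * g k j p := by
    rw [h1, Finset.sum_insert (by simp)]
    simp
  rw [h2, ← binom_mean k p]
  rw [← Finset.sum_subset (Finset.range_subset_range.2 (by omega : k+1 ≤ N+1))]
  · exact Finset.sum_congr rfl fun j hj => by
      rw [g, if_pos (by simp at hj; omega)]
  · intro j hj hj2
    simp only [Finset.mem_range] at hj hj2
    rw [g, if_neg (by omega), mul_zero]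

theorem hmean_formula (n : ℕ) (hn : 1 ≤ n) (q b : ℕ → ℝ) (p : ℝ)
    (hq0 : ∀ k, 0 ≤ q k) (hq1 : ∑' k, q k = 1) (hqs : Summable q)
    (hp : p ∈ Set.Icc (0 : ℝ) 1) (hb : ∀ k, b k ∈ Set.Icc (0 : ℝ) 1)
    (hbn : ∀ k, n ≤ k → b k = 0) :
    ∀ i < n, hmean n q b p i =
      (∑' t : ℕ, q t * (min (i + t) n : ℕ)) -
        (1 - p) * ∑' t : ℕ, q t * ((i + t : ℕ) : ℝ) * b (i + t) := by
  intro i hi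
  set m := n - i with hm
  set T : ℝ := ∑' t : ℕ, if n ≤ i + t then q t else 0 with hT
  -- second tsum is a finite sum
  have hS2 : (∑' t : ℕ, q t * ((i + t : ℕ) : ℝ) * b (i + t))
      = ∑ t ∈ Finset.range m, q t * ((i + t : ℕ) : ℝ) * b (i + t) := by
    refine tsum_eq_sum fun t ht => ?_
    rw [hbn (i + t) (by simp only [Finset.mem_range] at ht; omega), mul_zero]
  -- Q at n
  have hQn : Qmat n q b i n = T := by
    rw [Qmat, if_neg (lt_irrefl n), hT]
    refine tsum_congr fun t => ?_
    by_cases h : n ≤ i + t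
    · rw [if_pos h, if_pos h, hbn (i + t) h]; ring
    · rw [if_neg h, if_neg h]
  -- R at n
  have hRn : Rmat n q b p i n = 0 := by
    rw [Rmat, if_neg (lt_irrefl n)]
    have : ∀ t : ℕ, (if n ≤ i + t then
        q t * b (i + t) * ∑ j' ∈ Finset.Icc n (i + t), g (i + t) j' p else 0) = 0 := by
      intro t
      by_cases h : n ≤ i + t
      · rw [if_pos h, hbn (i + t) h]; ring
      · rw [if_neg h]
    simp only [this, tsum_zero]
  -- R for j < n
  have hRj : ∀ j < n, Rmat n q b p i j
      = ∑ t ∈ Finset.range m, q t * b (i + t) * g (i + t) j p := by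
    intro j hj
    rw [Rmat, if_pos hj]
    refine tsum_eq_sum fun t ht => ?_
    rw [hbn (i + t) (by simp only [Finset.mem_range] at ht; omega)]; ring
  -- split Icc 1 n
  have hsplit : Finset.Icc 1 n = insert n (Finset.Icc 1 (n - 1)) := by
    ext x; simp only [Finset.mem_Icc, Finset.mem_insert]; omega
  have hnmem : n ∉ Finset.Icc 1 (n - 1) := by simp only [Finset.mem_Icc]; omega
  -- compute hmean
  have hA : ∑ j ∈ Finset.Icc 1 (n - 1), (j : ℝ) * Qmat n q b i j
      = ∑ t ∈ Finset.range m, ((i + t : ℕ) : ℝ) * (q t * (1 - b (i + t))) := by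
    have hQj : ∀ j ∈ Finset.Icc 1 (n - 1), (j : ℝ) * Qmat n q b i j
        = (j : ℝ) * (if i ≤ j then q (j - i) * (1 - b j) else 0) := by
      intro j hj
      simp only [Finset.mem_Icc] at hj
      rw [Qmat, if_pos (by omega)]
    rw [Finset.sum_congr rfl hQj]
    have h0 : Finset.range n = insert 0 (Finset.Icc 1 (n - 1)) := by
      ext x; simp only [Finset.mem_range, Finset.mem_insert, Finset.mem_Icc]; omega
    have h1 : ∑ j ∈ Finset.Icc 1 (n - 1), (j : ℝ) * (if i ≤ j then q (j - i) * (1 - b j) else 0)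
        = ∑ j ∈ Finset.range n, (j : ℝ) * (if i ≤ j then q (j - i) * (1 - b j) else 0) := by
      rw [h0, Finset.sum_insert (by simp only [Finset.mem_Icc]; omega)]
      simp
    have hsub : Finset.Ico i n ⊆ Finset.range n := by
      intro x hx; simp only [Finset.mem_Ico, Finset.mem_range] at *; omega
    rw [h1, ← Finset.sum_subset hsub]
    · rw [Finset.sum_Ico_eq_sum_range]
      refine Finset.sum_congr rfl fun t _ => ?_
      rw [if_pos (Nat.le_add_right i t), Nat.add_sub_cancel_left]
    · intro j hj hj2
      simp only [Finset.mem_Ico, Finset.mem_range] at hj hj2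
      rw [if_neg (by omega), mul_zero]
  have hB : ∑ j ∈ Finset.Icc 1 (n - 1), (j : ℝ) * Rmat n q b p i j
      = ∑ t ∈ Finset.range m, q t * b (i + t) * (((i + t : ℕ) : ℝ) * p) := by
    have : ∀ j ∈ Finset.Icc 1 (n - 1), (j : ℝ) * Rmat n q b p i j
        = ∑ t ∈ Finset.range m, q t * b (i + t) * ((j : ℝ) * g (i + t) j p) := by
      intro j hj
      simp only [Finset.mem_Icc] at hj
      rw [hRj j (by omega), Finset.mul_sum]
      exact Finset.sum_congr rfl fun t _ => by ring
    rw [Finset.sum_congr rfl this, Finset.sum_comm]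
    refine Finset.sum_congr rfl fun t ht => ?_
    simp only [Finset.mem_range] at ht
    rw [← Finset.mul_sum, g_mean (i + t) (n - 1) (by omega)]
  -- first tsum split
  have key : ∀ t : ℕ, q t * ((min (i + t) n : ℕ) : ℝ)
      = (if t ∈ Finset.range m then q t * ((i + t : ℕ) : ℝ) else 0)
        + (if n ≤ i + t then (n : ℝ) * q t else 0) := by
    intro t
    by_cases h : t < m
    · rw [if_pos (Finset.mem_range.2 h), if_neg (by omega), min_eq_left (by omega), add_zero]
    · rw [if_neg (fun hc => h (Finset.mem_range.1 hc)), if_pos (by omega),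
        min_eq_right (by omega), zero_add]
      ring
  have hf1 : Summable (fun t : ℕ => if t ∈ Finset.range m then q t * ((i + t : ℕ) : ℝ) else 0) :=
    summable_of_ne_finset_zero (s := Finset.range m) fun t ht => if_neg ht
  have hf2 : Summable (fun t : ℕ => if n ≤ i + t then (n : ℝ) * q t else 0) := by
    refine Summable.of_nonneg_of_le (fun t => ?_) (fun t => ?_) (hqs.mul_left (n : ℝ))
    · split_ifs with h
      · exact mul_nonneg (Nat.cast_nonneg n) (hq0 t)
      · exact le_rfl
    · split_ifs with h
      · exact le_rfl
      · exact mul_nonneg (Nat.cast_nonneg n) (hq0 t)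
  have hS1 : (∑' t : ℕ, q t * ((min (i + t) n : ℕ) : ℝ))
      = (∑ t ∈ Finset.range m, q t * ((i + t : ℕ) : ℝ)) + (n : ℝ) * T := by
    rw [tsum_congr key, Summable.tsum_add hf1 hf2]
    congr 1
    · rw [tsum_eq_sum (fun t ht => if_neg ht)]
      exact Finset.sum_congr rfl fun t ht => if_pos ht
    · rw [hT, ← tsum_mul_left]
      exact tsum_congr fun t => by by_cases h : n ≤ i + t <;> simp [h]
  -- assemble
  rw [hmean, hsplit, Finset.sum_insert hnmem]
  have hpmat : ∀ j, pmat n q b p i j = Qmat n q b i j + Rmat n q b p i j := by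
    intro j; rw [pmat, if_pos hi]
  simp only [hpmat]
  rw [hQn, hRn, add_zero]
  have hsum : ∑ j ∈ Finset.Icc 1 (n - 1), (j : ℝ) * (Qmat n q b i j + Rmat n q b p i j)
      = (∑ j ∈ Finset.Icc 1 (n - 1), (j : ℝ) * Qmat n q b i j)
        + ∑ j ∈ Finset.Icc 1 (n - 1), (j : ℝ) * Rmat n q b p i j := by
    rw [← Finset.sum_add_distrib]
    exact Finset.sum_congr rfl fun j _ => by ring
  rw [hsum, hA, hB, hS1, hS2]
  have hfin : (∑ t ∈ Finset.range m, ((i + t : ℕ) : ℝ) * (q t * (1 - b (i + t))))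
      + ∑ t ∈ Finset.range m, q t * b (i + t) * (((i + t : ℕ) : ℝ) * p)
      = (∑ t ∈ Finset.range m, q t * ((i + t : ℕ) : ℝ))
        - (1 - p) * ∑ t ∈ Finset.range m, q t * ((i + t : ℕ) : ℝ) * b (i + t) := by
    rw [Finset.mul_sum, ← Finset.sum_add_distrib, ← Finset.sum_sub_distrib]
    exact Finset.sum_congr rfl fun t _ => by ring
  linarith [hfin]
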